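/- Let σ: ℕ → ℕ be a bijection and let T = T_σ be the associated permutation operator on H. Then P(T) = H if and only if every equivalence class [m] is finite and sup{card([m]) : m ∈ ℕ} < ∞. -/

import Mathlib

/-!
Both sides say that `σ` has finite order. The orbit of `n` has as many points as the minimal
period of `n`, so orbits of size at most `B` give `σ ^ B! = 1`, while `σ ^ m = 1` bounds them by
`m`. On the operator side, `σ ^ m = 1` gives `T ^ m = 1`; conversely `T ^ m` permutes coordinates
by `σ ^ m`, so if it fixes a single vector with pairwise distinct coordinates (say `2⁻ⁿ`), then
`σ ^ m = 1`.
-/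

/-- The orbit `[n] = {σ^k n : k ∈ ℤ}` of `n` under the bijection `σ : ℕ → ℕ`. -/
def permOrbit (σ : Equiv.Perm ℕ) (n : ℕ) : Set ℕ := {m : ℕ | ∃ z : ℤ, (σ ^ z) n = m}

open Function MulAction
open scoped ENNReal

namespace MulAction

variable {G β : Type*} [Group G] [MulAction G β]

theorem ncard_orbit_zpowers (g : G) (b : β) :
    (orbit (Subgroup.zpowers g) b).ncard = minimalPeriod (g • ·) b := by
  rw [← Nat.card_coe_set_eq, Nat.card_congr (orbitZPowersEquiv g b), Nat.card_zmod]

theorem finite_orbit_zpowers_iff (g : G) (b : β) :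
    (orbit (Subgroup.zpowers g) b).Finite ↔ 0 < minimalPeriod (g • ·) b := by
  rw [← ncard_orbit_zpowers]
  refine ⟨fun h => (Set.ncard_pos h).mpr (nonempty_orbit b), fun h => ?_⟩
  by_contra hinf
  exact (Set.Infinite.ncard hinf ▸ h).false

end MulAction

theorem Equiv.Perm.isOfFinOrder_iff_minimalPeriod_bounded {α : Type*} (σ : Equiv.Perm α) :
    IsOfFinOrder σ ↔ (∀ x, 0 < minimalPeriod σ x) ∧ ∃ B, ∀ x, minimalPeriod σ x ≤ B := by
  have isPeriodicPt_iff (n : ℕ) (x : α) : IsPeriodicPt σ n x ↔ (σ ^ n) x = x := by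
    rw [IsPeriodicPt, IsFixedPt, Equiv.Perm.iterate_eq_pow]
  rw [isOfFinOrder_iff_pow_eq_one]
  constructor
  · rintro ⟨n, hn, hσn⟩
    have hper (x : α) : IsPeriodicPt σ n x := (isPeriodicPt_iff n x).mpr (by simp [hσn])
    exact ⟨fun x => (hper x).minimalPeriod_pos hn, n, fun x => (hper x).minimalPeriod_le hn⟩
  · rintro ⟨hpos, B, hB⟩
    refine ⟨B.factorial, B.factorial_pos, Equiv.ext fun x => (isPeriodicPt_iff _ x).mp ?_⟩
    exact isPeriodicPt_iff_minimalPeriod_dvd.mpr (Nat.dvd_factorial (hpos x) (hB x))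

section permOrbit

variable (σ : Equiv.Perm ℕ) (n : ℕ)

theorem permOrbit_eq_orbit_zpowers : permOrbit σ n = orbit (Subgroup.zpowers σ) n := by
  ext m
  simp only [permOrbit, Set.mem_ofPred_eq, mem_orbit_iff, Subgroup.exists_zpowers]
  rfl

theorem permOrbit_finite_iff : (permOrbit σ n).Finite ↔ 0 < minimalPeriod σ n := by
  rw [permOrbit_eq_orbit_zpowers]
  exact finite_orbit_zpowers_iff σ n

theorem ncard_permOrbit : (permOrbit σ n).ncard = minimalPeriod σ n := by
  rw [permOrbit_eq_orbit_zpowers]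
  exact ncard_orbit_zpowers σ n

end permOrbit

namespace HilbertBasis

variable {ι 𝕜 H : Type*} [RCLike 𝕜] [NormedAddCommGroup H] [InnerProductSpace 𝕜 H]
  (e : HilbertBasis ι 𝕜 H)

theorem continuousLinearMap_ext {F : Type*} [NormedAddCommGroup F] [NormedSpace 𝕜 F]
    {f g : H →L[𝕜] F} (h : ∀ i, f (e i) = g (e i)) : f = g :=
  ContinuousLinearMap.ext_on (Submodule.dense_iff_topologicalClosure_eq_top.mpr e.dense_span) <| by
    rintro _ ⟨i, rfl⟩
    exact h i

theorem exists_injective_repr (e : HilbertBasis ℕ 𝕜 H) : ∃ x : H, Injective (e.repr x) := by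
  have hmem : Memℓp (fun n : ℕ => ((2⁻¹ ^ n : ℝ) : 𝕜)) 2 := by
    refine memℓp_gen ?_
    have hnorm (n : ℕ) : ‖((2⁻¹ ^ n : ℝ) : 𝕜)‖ ^ (2 : ℝ≥0∞).toReal = (2⁻¹ ^ 2 : ℝ) ^ n := by
      rw [RCLike.norm_ofReal, abs_of_pos (by positivity), ENNReal.toReal_ofNat, Real.rpow_two,
        ← pow_mul, ← pow_mul, mul_comm]
    simpa only [hnorm] using summable_geometric_of_lt_one (by positivity) (by norm_num)
  refine ⟨e.repr.symm ⟨_, hmem⟩, ?_⟩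
  rw [LinearIsometryEquiv.apply_symm_apply]
  exact RCLike.ofReal_injective.comp (pow_right_injective₀ (by norm_num) (by norm_num))

def IsPermOperator (σ : Equiv.Perm ι) (T : H →L[𝕜] H) : Prop :=
  ∀ i, T (e i) = e (σ i)

namespace IsPermOperator

variable {e} {σ : Equiv.Perm ι} {T : H →L[𝕜] H}

theorem pow (hT : e.IsPermOperator σ T) (m : ℕ) : e.IsPermOperator (σ ^ m) (T ^ m) := by
  induction m with
  | zero => simp [IsPermOperator]
  | succ m ih =>
    intro i
    rw [pow_succ, pow_succ, mul_apply_eq_comp, hT, ih, Equiv.Perm.mul_apply]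

theorem eq_one_of_perm_eq_one (hT : e.IsPermOperator σ T) (hσ : σ = 1) : T = 1 :=
  e.continuousLinearMap_ext fun i => by simp [hT i, hσ]

theorem repr_apply (hT : e.IsPermOperator σ T) (x : H) (i : ι) :
    e.repr (T x) i = e.repr x (σ⁻¹ i) := by
  classical
  have hcoord : (innerSL 𝕜 (e i)).comp T = innerSL 𝕜 (e (σ⁻¹ i)) := by
    refine e.continuousLinearMap_ext fun j => ?_
    simp only [ContinuousLinearMap.comp_apply, innerSL_apply_apply, hT j,
      orthonormal_iff_ite.mp e.orthonormal, Equiv.Perm.inv_def, Equiv.symm_apply_eq,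
      eq_comm (a := i)]
  simpa [e.repr_apply_apply] using DFunLike.congr_fun hcoord x

theorem perm_eq_one_of_apply_eq_self (hT : e.IsPermOperator σ T) {x : H} (hx : T x = x)
    (hinj : Injective (e.repr x)) : σ = 1 := by
  ext i
  have hcoeff : e.repr x (σ⁻¹ i) = e.repr x i := by rw [← hT.repr_apply, hx]
  exact (Equiv.Perm.inv_eq_iff_eq.mp (hinj hcoeff)).symm

end IsPermOperator

end HilbertBasis

theorem permutation_periodic_points_univ_iff_general
    {H : Type*} [NormedAddCommGroup H] [InnerProductSpace ℂ H]
    (e : HilbertBasis ℕ ℂ H) (σ : Equiv.Perm ℕ) (T : H →L[ℂ] H)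
    (hT : ∀ n, T (e n) = e (σ n)) :
    {x : H | ∃ m : ℕ, 0 < m ∧ (T ^ m) x = x} = Set.univ
      ↔ (∀ m : ℕ, (permOrbit σ m).Finite) ∧
        ∃ B : ℕ, ∀ m : ℕ, (permOrbit σ m).ncard ≤ B := by
  have hT : e.IsPermOperator σ T := hT
  simp only [permOrbit_finite_iff, ncard_permOrbit,
    ← Equiv.Perm.isOfFinOrder_iff_minimalPeriod_bounded, isOfFinOrder_iff_pow_eq_one]
  constructor
  · intro hP
    obtain ⟨x, hx⟩ := e.exists_injective_repr
    obtain ⟨m, hm, hTm⟩ := Set.eq_univ_iff_forall.mp hP x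
    exact ⟨m, hm, (hT.pow m).perm_eq_one_of_apply_eq_self hTm hx⟩
  · rintro ⟨m, hm, hσm⟩
    refine Set.eq_univ_of_forall fun x => ⟨m, hm, ?_⟩
    rw [(hT.pow m).eq_one_of_perm_eq_one hσm, one_apply_eq_self]

/-- For a permutation operator `T e_n = e_{σ n}`, every point of `H` is periodic iff every
orbit of `σ` is finite and the orbit cardinalities are uniformly bounded. -/
theorem permutation_periodic_points_univ_iff
    {H : Type*} [NormedAddCommGroup H] [InnerProductSpace ℂ H] [CompleteSpace H]
    (e : HilbertBasis ℕ ℂ H) (σ : Equiv.Perm ℕ) (T : H →L[ℂ] H)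
    (hT : ∀ n, T (e n) = e (σ n)) :
    {x : H | ∃ m : ℕ, 0 < m ∧ (T ^ m) x = x} = Set.univ
      ↔ (∀ m : ℕ, (permOrbit σ m).Finite) ∧
        ∃ B : ℕ, ∀ m : ℕ, (permOrbit σ m).ncard ≤ B :=
  permutation_periodic_points_univ_iff_general e σ T hT
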